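/- arXiv:1505.06394 — 3 statements merged into one kernel-verified Lean document; each statement's English description precedes it below -/
import Mathlib

section
/- For all integers r ≥ 2 and s ≥ 2, the discrete polynomials P^r_s defined by P^r_s(i) = T^r_s(i) - T(i)·T(i+s+r-2)·T^{r-2}_{s-2}(i+2) satisfy the two identities P^r_s(i) = T(i+s+r-2)·T^{r-1}_{s-2}(i+1) + T^r_{s-1}(i) and P^r_s(i) = T(i)·T^{r-1}_{s-2}(i+2) + T^r_{s-1}(i+1). -/
variable {R : Type*} [CommRing R]

/-- Discrete polynomials `T^r_s(i)` (case `h = n = 1`), with the convention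
`T^0_s = 1` and `T^r_s = 0` for `s = 0`, `r ≥ 1`. -/
def Tp (T : ℤ → R) : ℕ → ℕ → ℤ → R
  | 0, _, _ => 1
  | _ + 1, 0, _ => 0
  | r + 1, s + 1, i => Tp T (r + 1) s (i + 1) + T i * Tp T r s (i + 2)

/-- Discrete polynomials `S^r_s(i)` (case `h = n = 1`). -/
def Sp (T : ℤ → R) : ℕ → ℕ → ℤ → R
  | 0, _, _ => 1
  | _ + 1, 0, _ => 0
  | r + 1, 1, i => ∏ q ∈ Finset.range (r + 1), T (i + q)
  | r + 1, s + 2, i => Sp T (r + 1) (s + 1) (i + 1) + T (i + r) * Sp T r (s + 2) i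
  termination_by r s _ => r + s

/-- Discrete polynomials `P^r_s(i) = T^r_s(i) - T(i)·T(i+s+r-2)·T^{r-2}_{s-2}(i+2)`. -/
def Pp (T : ℤ → R) (r s : ℕ) (i : ℤ) : R :=
  Tp T r s i - T i * T (i + (s : ℤ) + (r : ℤ) - 2) * Tp T (r - 2) (s - 2) (i + 2)

lemma Tp_succ_succ (T : ℤ → R) (r s : ℕ) (i : ℤ) :
    Tp T (r + 1) (s + 1) i = Tp T (r + 1) s (i + 1) + T i * Tp T r s (i + 2) := rfl

lemma Tp_one (T : ℤ → R) (s : ℕ) : ∀ i : ℤ, Tp T 1 s i = ∑ q ∈ Finset.range s, T (i + q) := by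
  induction s with
  | zero => intro i; simp [Tp]
  | succ s ih =>
    intro i
    rw [Tp_succ_succ, ih, Finset.sum_range_succ']
    have h : ∀ q ∈ Finset.range s, T (i + 1 + (q : ℤ)) = T (i + ((q : ℕ) + 1 : ℕ)) := by
      intro q _; congr 1; push_cast; ring
    rw [Finset.sum_congr rfl h]
    simp [Tp]

lemma Tp_key (T : ℤ → R) : ∀ (b a : ℕ) (j : ℤ),
    Tp T (a + 1) (b + 1) j = Tp T (a + 1) b j + T (j + a + b) * Tp T a b j := by
  intro b
  induction b with
  | zero =>
    intro a j
    cases a with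
    | zero => simp [Tp]
    | succ c => simp [Tp]
  | succ b ih =>
    intro a j
    cases a with
    | zero =>
      rw [Tp_one, Tp_one, Finset.sum_range_succ]
      simp only [Tp, Nat.cast_zero, add_zero, Nat.cast_succ, mul_one]
    | succ c =>
      rw [Tp_succ_succ T (c + 1) (b + 1) j, ih (c + 1) (j + 1), ih c (j + 2),
        Tp_succ_succ T (c + 1) b j, Tp_succ_succ T c b j]
      push_cast
      ring_nf

/-- For `r, s ≥ 2`, `P^r_s(i) = T(i+s+r-2)·T^{r-1}_{s-2}(i+1) + T^r_{s-1}(i)`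
and `P^r_s(i) = T(i)·T^{r-1}_{s-2}(i+2) + T^r_{s-1}(i+1)`. -/
theorem Pp_identities (T : ℤ → R) (r s : ℕ) (hr : 2 ≤ r) (hs : 2 ≤ s) (i : ℤ) :
    Pp T r s i = T (i + (s : ℤ) + (r : ℤ) - 2) * Tp T (r - 1) (s - 2) (i + 1) + Tp T r (s - 1) i ∧
    Pp T r s i = T i * Tp T (r - 1) (s - 2) (i + 2) + Tp T r (s - 1) (i + 1) := by
  obtain ⟨a, rfl⟩ : ∃ a, r = a + 2 := ⟨r - 2, by omega⟩
  obtain ⟨b, rfl⟩ : ∃ b, s = b + 2 := ⟨s - 2, by omega⟩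
  simp only [Pp, show a + 2 - 2 = a by omega, show b + 2 - 2 = b by omega,
    show a + 2 - 1 = a + 1 by omega, show b + 2 - 1 = b + 1 by omega]
  rw [Tp_succ_succ T (a + 1) (b + 1) i, Tp_key T b (a + 1) (i + 1), Tp_key T b a (i + 2)]
  constructor
  · rw [Tp_succ_succ T (a + 1) b i]
    push_cast
    ring_nf
  · push_cast
    ring_nf
end

section
/- For all integers r ≥ 2 and s ≥ 1, the discrete polynomials Q^r_s defined by Q^r_s(i) = S^r_s(i) - T(i+r-2)·T(i+s)·S^{r-2}_{s+2}(i) satisfy the identities S^r_{s+1}(i) = Q^r_s(i) + T(i+s)·S^{r-1}_{s+2}(i) and S^r_{s+1}(i) = Q^r_s(i+1) + T(i+r-1)·S^{r-1}_{s+2}(i). -/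
variable {R : Type*} [CommRing R]

/-- Discrete polynomials `Q^r_s(i) = S^r_s(i) - T(i+r-2)·T(i+s)·S^{r-2}_{s+2}(i)`
(for `r ≥ 2`), with `Q^0_s = 1` and `Q^1_s = S^1_s`. -/
def Qp (T : ℤ → R) : ℕ → ℕ → ℤ → R
  | 0, _, _ => 1
  | 1, s, i => Sp T 1 s i
  | r + 2, s, i => Sp T (r + 2) s i - T (i + r) * T (i + s) * Sp T r (s + 2) i

lemma Sp_rec (T : ℤ → R) (r s : ℕ) (i : ℤ) :
    Sp T (r+1) (s+2) i = Sp T (r+1) (s+1) (i+1) + T (i+r) * Sp T r (s+2) i := by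
  rw [Sp]

lemma Sp_one (T : ℤ → R) (r : ℕ) (i : ℤ) :
    Sp T (r+1) 1 i = ∏ q ∈ Finset.range (r + 1), T (i + q) := by rw [Sp]

lemma Sp_zero (T : ℤ → R) (s : ℕ) (i : ℤ) : Sp T 0 s i = 1 := by rw [Sp]

lemma Sp_one_left (T : ℤ → R) (m : ℕ) (i : ℤ) :
    Sp T (m+2) 1 i = T i * Sp T (m+1) 1 (i+1) := by
  rw [Sp_one, Sp_one, Finset.prod_range_succ', mul_comm]
  congr 1
  · congr 1; push_cast; ring
  · refine Finset.prod_congr rfl fun q _ => ?_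
    congr 1; push_cast; ring

lemma Sp_one_right (T : ℤ → R) (m : ℕ) (i : ℤ) :
    Sp T (m+2) 1 i = Sp T (m+1) 1 i * T (i + ((m:ℤ)+1)) := by
  rw [Sp_one, Sp_one, Finset.prod_range_succ]; norm_cast

/-- The key identity `S^r_{s+1}(i) = S^r_s(i) + T(i+s)·S^{r-1}_{s+1}(i+1)` for
`r ≥ 1`, `s ≥ 1` (stated with `r+1`, `s+1` in place of `r`, `s`). -/
lemma SpA (T : ℤ → R) : ∀ (r s : ℕ) (i : ℤ),
    Sp T (r+1) (s+2) i = Sp T (r+1) (s+1) i + T (i + (s : ℤ) + 1) * Sp T r (s+2) (i+1)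
  | 0, 0, i => by
      rw [Sp_rec T 0 0 i, Sp_zero, Sp_zero, Sp_one, Sp_one]
      simp [Finset.prod_range_succ]; ring
  | (m+1), 0, i => by
      rw [Sp_rec T (m+1) 0 i]
      have hL : Sp T (m+1+1) (0+1) (i+1) = _ := Sp_one_left T m (i+1)
      have hR : Sp T (m+1+1) (0+1) i = _ := Sp_one_right T m i
      have h2 : Sp T (m+1) (0+2) i = _ := SpA T m 0 i
      have h3 : Sp T (m+1) (0+2) (i+1) = _ := Sp_rec T m 0 (i+1)
      rw [hL, hR, h2, h3]
      push_cast
      ring_nf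
  | 0, (t+1), i => by
      rw [Sp_rec T 0 (t+1) i]
      have h1 : Sp T (0+1) (t+1+1) (i+1) = _ := SpA T 0 t (i+1)
      have h2 : Sp T (0+1) (t+1+1) i = _ := Sp_rec T 0 t i
      rw [h1, h2]; simp only [Sp_zero]
      push_cast
      ring_nf
  | (m+1), (t+1), i => by
      rw [Sp_rec T (m+1) (t+1) i]
      have h1 : Sp T (m+1+1) (t+1+1) (i+1) = _ := SpA T (m+1) t (i+1)
      have h2 : Sp T (m+1+1) (t+1+1) i = _ := Sp_rec T (m+1) t i
      have h3 : Sp T (m+1) (t+1+2) i = _ := SpA T m (t+1) i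
      have h4 : Sp T (m+1) (t+1+2) (i+1) = _ := Sp_rec T m (t+1) (i+1)
      rw [h1, h2, h3, h4]
      push_cast
      ring_nf
  termination_by r s _ => r + s

/-- For `r ≥ 2`, `s ≥ 1`:
`S^r_{s+1}(i) = Q^r_s(i) + T(i+s)·S^{r-1}_{s+2}(i)` and
`S^r_{s+1}(i) = Q^r_s(i+1) + T(i+r-1)·S^{r-1}_{s+2}(i)`. -/
theorem Qp_identities (T : ℤ → R) (r s : ℕ) (hr : 2 ≤ r) (hs : 1 ≤ s) (i : ℤ) :
    Sp T r (s + 1) i = Qp T r s i + T (i + (s : ℤ)) * Sp T (r - 1) (s + 2) i ∧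
    Sp T r (s + 1) i = Qp T r s (i + 1) + T (i + (r : ℤ) - 1) * Sp T (r - 1) (s + 2) i := by
  obtain ⟨m, rfl⟩ : ∃ m, r = m + 2 := ⟨r - 2, by omega⟩
  obtain ⟨t, rfl⟩ : ∃ t, s = t + 1 := ⟨s - 1, by omega⟩
  constructor
  · have hA : Sp T (m+2-1) (t+1+2) i = _ := Sp_rec T m (t+1) i
    have hB : Sp T (m+2) (t+1+1) i = _ := SpA T (m+1) t i
    rw [hB, hA]
    simp only [Qp]
    push_cast
    ring_nf
  · have hA : Sp T (m+2-1) (t+1+2) i = _ := SpA T m (t+1) i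
    have hB : Sp T (m+2) (t+1+1) i = _ := Sp_rec T (m+1) t i
    rw [hB, hA]
    simp only [Qp]
    push_cast
    ring_nf
end

section
/- Let k ≥ 1 and s ≥ k+1. If a sequence T (with nonzero values in a field) satisfies the (k-1, s+1)-th equation T(i+k-1)·S̃^{k-1}_{s+2}(i) = T(i+s+1)·S̃^{k-1}_{s+2}(i+1) for all i with parameters H₁,...,H_{k-1}, and moreover H_k is chosen so that S̃^k_{s+1}(i₀) = 0 at some i₀, then S̃^k_{s+1}(i) = 0 for all i, and T satisfies the (k,s)-th equation T(i+k)·S̃^k_{s+1}(i) = T(i+s)·S̃^k_{s+1}(i+1) for all i. (Hence the solution space inclusion 𝒩^{k-1}_{s+1} ⊂ 𝒩^k_s.) -/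
variable {R : Type*} [CommRing R]

/-- Non-homogeneous polynomials `S̃^r_s(i) = Σ_{j=0}^r (-1)^j H_j S^{r-j}_{s-j}(i+j)`. -/
def Stil (T : ℤ → R) (H : ℕ → R) (r s : ℕ) (i : ℤ) : R :=
  ∑ j ∈ Finset.range (r + 1), (-1 : R) ^ j * H j * Sp T (r - j) (s - j) (i + j)

section Recursions

variable (T : ℤ → R)

@[simp]
lemma Sp_zero_left (s : ℕ) (i : ℤ) : Sp T 0 s i = 1 := by
  simp [Sp]

@[simp]
lemma Sp_succ_zero (r : ℕ) (i : ℤ) : Sp T (r + 1) 0 i = 0 := by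
  simp [Sp]

lemma Sp_succ_one (r : ℕ) (i : ℤ) :
    Sp T (r + 1) 1 i = ∏ q ∈ Finset.range (r + 1), T (i + q) := by
  simp [Sp]

lemma Sp_succ_succ (r s : ℕ) (i : ℤ) :
    Sp T (r + 1) (s + 1) i = Sp T (r + 1) s (i + 1) + T (i + r) * Sp T r (s + 1) i := by
  rcases s with _ | s
  · rcases r with _ | r
    · simp [Sp_succ_one]
    · rw [Sp_succ_one, Sp_succ_one, Sp_succ_zero, Finset.prod_range_succ]
      push_cast
      ring_nf
  · rw [Sp]

lemma Sp_succ_succ' (r s : ℕ) (i : ℤ) :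
    Sp T (r + 1) (s + 1) i = Sp T (r + 1) s i + T (i + s) * Sp T r (s + 1) (i + 1) := by
  induction r generalizing s i with
  | zero =>
    induction s generalizing i with
    | zero => simp [Sp_succ_one]
    | succ s ih =>
      rw [Sp_succ_succ T 0 (s + 1) i, ih (i + 1), Sp_succ_succ T 0 s i]
      simp only [Sp_zero_left]
      push_cast
      ring_nf
  | succ r ihr =>
    induction s generalizing i with
    | zero =>
      rw [Sp_succ_one, Sp_succ_one, Sp_succ_zero, Finset.prod_range_succ']
      push_cast
      ring_nf
    | succ s ihs =>
      rw [Sp_succ_succ T (r + 1) (s + 1) i, ihs (i + 1), ihr (s + 1) i,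
        Sp_succ_succ T (r + 1) s i, Sp_succ_succ T r (s + 1) (i + 1)]
      push_cast
      ring_nf

end Recursions

section NonHomogeneous

variable (T : ℤ → R) (H : ℕ → R)

lemma Stil_succ (m s : ℕ) (i : ℤ) :
    Stil T H (m + 1) s i = ∑ j ∈ Finset.range (m + 1),
        (-1 : R) ^ j * H j * Sp T (m + 1 - j) (s - j) (i + j) +
      (-1 : R) ^ (m + 1) * H (m + 1) := by
  rw [Stil, Finset.sum_range_succ, Nat.sub_self, Sp_zero_left, mul_one]

lemma Stil_succ_succ {m s : ℕ} (hms : m ≤ s + 1) (i : ℤ) :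
    Stil T H (m + 1) (s + 2) i =
      Stil T H (m + 1) (s + 1) (i + 1) + T (i + m) * Stil T H m (s + 2) i := by
  rw [Stil_succ, Stil_succ, Stil, Finset.mul_sum, add_right_comm, ← Finset.sum_add_distrib]
  congr 1
  refine Finset.sum_congr rfl fun j hj => ?_
  have hj : j ≤ m := Nat.lt_succ_iff.mp (Finset.mem_range.mp hj)
  rw [show m + 1 - j = (m - j) + 1 by omega, show s + 2 - j = (s + 1 - j) + 1 by omega,
    Sp_succ_succ, show i + j + ((m - j : ℕ) : ℤ) = i + m by omega, add_right_comm i 1]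
  ring

lemma Stil_succ_succ' {m s : ℕ} (hms : m ≤ s + 1) (i : ℤ) :
    Stil T H (m + 1) (s + 2) i =
      Stil T H (m + 1) (s + 1) i + T (i + s + 1) * Stil T H m (s + 2) (i + 1) := by
  rw [Stil_succ, Stil_succ, Stil, Finset.mul_sum, add_right_comm, ← Finset.sum_add_distrib]
  congr 1
  refine Finset.sum_congr rfl fun j hj => ?_
  have hj : j ≤ m := Nat.lt_succ_iff.mp (Finset.mem_range.mp hj)
  rw [show m + 1 - j = (m - j) + 1 by omega, show s + 2 - j = (s + 1 - j) + 1 by omega,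
    Sp_succ_succ', show i + j + ((s + 1 - j : ℕ) : ℤ) = i + s + 1 by omega, add_right_comm i 1]
  ring

/-- Subtracting the two recursions, the `(m, s + 1)`-th equation for `S̃^m_{s+2}` says exactly that
`S̃^{m+1}_{s+1}` takes equal values at `i` and `i + 1`. -/
lemma Stil_periodic_of_equation {m s : ℕ} (hms : m ≤ s + 1)
    (heq : ∀ i : ℤ,
      T (i + m) * Stil T H m (s + 2) i = T (i + s + 1) * Stil T H m (s + 2) (i + 1)) :
    Function.Periodic (Stil T H (m + 1) (s + 1)) 1 := fun i => by
  linear_combination Stil_succ_succ' T H hms i - Stil_succ_succ T H hms i - heq i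

end NonHomogeneous

theorem solution_space_inclusion_general {K : Type*} [Field K] (T : ℤ → K)
    (k s : ℕ) (hk : 1 ≤ k) (hs : k + 1 ≤ s) (H : ℕ → K)
    (heq : ∀ i : ℤ, T (i + (k : ℤ) - 1) * Stil T H (k - 1) (s + 2) i =
      T (i + (s : ℤ) + 1) * Stil T H (k - 1) (s + 2) (i + 1))
    (i₀ : ℤ) (h0 : Stil T H k (s + 1) i₀ = 0) :
    (∀ i : ℤ, Stil T H k (s + 1) i = 0) ∧
      (∀ i : ℤ, T (i + (k : ℤ)) * Stil T H k (s + 1) i =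
        T (i + (s : ℤ)) * Stil T H k (s + 1) (i + 1)) := by
  obtain ⟨m, rfl⟩ : ∃ m, k = m + 1 := ⟨k - 1, by omega⟩
  have hper : Function.Periodic (Stil T H (m + 1) (s + 1)) 1 :=
    Stil_periodic_of_equation T H (by omega) fun i => by
      simpa only [Nat.add_sub_cancel, Nat.cast_succ, ← add_assoc, add_sub_cancel_right]
        using heq i
  have hzero (i : ℤ) : Stil T H (m + 1) (s + 1) i = 0 := by
    rw [← h0, ← hper.sub_int_mul_eq (i - i₀), Int.cast_id, mul_one, sub_sub_cancel]
  exact ⟨hzero, fun i => by rw [hzero, hzero, mul_zero, mul_zero]⟩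

/-- Inclusion of solution spaces `𝒩^{k-1}_{s+1} ⊂ 𝒩^k_s`: if `T` satisfies the
`(k-1,s+1)`-th equation and `S̃^k_{s+1}` vanishes at one point, then `S̃^k_{s+1}`
vanishes identically and `T` satisfies the `(k,s)`-th equation. -/
theorem solution_space_inclusion {K : Type*} [Field K] (T : ℤ → K) (hT : ∀ i, T i ≠ 0)
    (k s : ℕ) (hk : 1 ≤ k) (hs : k + 1 ≤ s) (H : ℕ → K) (hH0 : H 0 = 1)
    (heq : ∀ i : ℤ, T (i + (k : ℤ) - 1) * Stil T H (k - 1) (s + 2) i =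
      T (i + (s : ℤ) + 1) * Stil T H (k - 1) (s + 2) (i + 1))
    (i₀ : ℤ) (h0 : Stil T H k (s + 1) i₀ = 0) :
    (∀ i : ℤ, Stil T H k (s + 1) i = 0) ∧
      (∀ i : ℤ, T (i + (k : ℤ)) * Stil T H k (s + 1) i =
        T (i + (s : ℤ)) * Stil T H k (s + 1) (i + 1)) :=
  solution_space_inclusion_general T k s hk hs H heq i₀ h0
end
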